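/- For every r > 0, the function f(t) = c₀e^{−4t} + c₊e^{−u₊t} + c₋e^{−u₋t} + p² (with the coefficients as in the stationary JC+CpG expression of (C,C)(t)) is a bijection (indeed a diffeomorphism) from [0,∞) onto (p², p], where p = (4+r)/(16+5r). -/

import Mathlib

open Real Filter Set

/-- u = √(4+2r+r²). -/
noncomputable def uu (r : ℝ) : ℝ := Real.sqrt (4 + 2*r + r^2)

/-- Stationary frequency of C: p = (4+r)/(16+5r). -/
noncomputable def pC (r : ℝ) : ℝ := (4 + r) / (16 + 5*r)

/-- c₀ = (3+r)/(2(16+5r)). -/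
noncomputable def c0 (r : ℝ) : ℝ := (3 + r) / (2 * (16 + 5*r))

/-- c₊ = (3+r)(u(16+3r) − (32+14r+3r²))/(4u(16+5r)²). -/
noncomputable def cp (r : ℝ) : ℝ :=
  (3 + r) * (uu r * (16 + 3*r) - (32 + 14*r + 3*r^2)) / (4 * uu r * (16 + 5*r)^2)

/-- c₋ = (3+r)(u(16+3r) + (32+14r+3r²))/(4u(16+5r)²). -/
noncomputable def cm (r : ℝ) : ℝ :=
  (3 + r) * (uu r * (16 + 3*r) + (32 + 14*r + 3*r^2)) / (4 * uu r * (16 + 5*r)^2)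

/-- (C,C)(t) in the stationary JC+CpG model:
f(t) = c₀e^{−4t} + c₊e^{−u₊t} + c₋e^{−u₋t} + p². -/
noncomputable def fCC (r t : ℝ) : ℝ :=
  c0 r * Real.exp (-4 * t) + cp r * Real.exp (-(6 + r + uu r) * t)
    + cm r * Real.exp (-(6 + r - uu r) * t) + (pC r)^2

/-!
Each summand `cᵢ e^{-kᵢ t}` of `f - p²` has `cᵢ > 0` and rate `kᵢ > 0` (the rates are `4` and
`6 + r ± u`, with `u < 6 + r`), so `f' < 0` everywhere and `f(t) → p²` as `t → ∞`. Since
`c₀ + c₊ + c₋ = p - p²` we have `f(0) = p`, and the intermediate value theorem gives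
surjectivity onto `(p², p]`.
-/

theorem Set.bijOn_Ici_Ioc_of_strictAntiOn {α δ : Type*} [ConditionallyCompleteLinearOrder α]
    [TopologicalSpace α] [OrderTopology α] [DenselyOrdered α] [NoMaxOrder α]
    [LinearOrder δ] [TopologicalSpace δ] [OrderClosedTopology δ] {f : α → δ} {a : α} {L : δ}
    (hcont : ContinuousOn f (Ici a)) (hanti : StrictAntiOn f (Ici a))
    (hlim : Tendsto f atTop (nhds L)) :
    BijOn f (Ici a) (Ioc L (f a)) := by
  have hL : ∀ s ∈ Ici a, L ≤ f s := fun s hs =>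
    le_of_tendsto hlim <| (eventually_ge_atTop s).mono fun x hx =>
      hanti.antitoneOn hs (mem_Ici.2 (le_trans hs hx)) hx
  refine ⟨fun t ht => ⟨?_, hanti.antitoneOn (mem_Ici.2 le_rfl) ht ht⟩, hanti.injOn, ?_⟩
  · obtain ⟨t', htt'⟩ := exists_gt t
    have ht' : t' ∈ Ici a := mem_Ici.2 ((mem_Ici.1 ht).trans htt'.le)
    exact (hL t' ht').trans_lt (hanti ht ht' htt')
  · rintro y ⟨hLy, hya⟩
    obtain ⟨T, hTy, haT⟩ :=
      ((hlim.eventually_lt_const hLy).and (eventually_ge_atTop a)).exists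
    obtain ⟨t, ht, rfl⟩ :=
      intermediate_value_Icc' haT (hcont.mono Icc_subset_Ici_self) ⟨hTy.le, hya⟩
    exact ⟨t, ht.1, rfl⟩

section ExpSum

open Finset

variable {ι : Type*} (s : Finset ι) (a k : ι → ℝ)

noncomputable def expSum (t : ℝ) : ℝ := ∑ i ∈ s, a i * exp (-k i * t)

theorem expSum_zero : expSum s a k 0 = ∑ i ∈ s, a i := by
  simp [expSum]

theorem hasDerivAt_expSum (t : ℝ) :
    HasDerivAt (expSum s a k) (∑ i ∈ s, a i * (-k i * exp (-k i * t))) t := by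
  refine HasDerivAt.fun_sum fun i _ => HasDerivAt.const_mul (a i) ?_
  simpa [mul_comm] using ((hasDerivAt_id t).const_mul (-k i)).exp

theorem tendsto_expSum_atTop (hk : ∀ i ∈ s, 0 < k i) :
    Tendsto (expSum s a k) atTop (nhds 0) := by
  show Tendsto (fun t => ∑ i ∈ s, a i * exp (-k i * t)) atTop (nhds 0)
  simpa using tendsto_finsetSum s fun i hi => (tendsto_exp_atBot.comp
    (tendsto_id.const_mul_atTop_of_neg (neg_lt_zero.2 (hk i hi)))).const_mul (a i)

variable {s a k}

theorem deriv_expSum_neg (hs : s.Nonempty) (ha : ∀ i ∈ s, 0 < a i) (hk : ∀ i ∈ s, 0 < k i)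
    (t : ℝ) : deriv (expSum s a k) t < 0 := by
  rw [(hasDerivAt_expSum s a k t).deriv]
  refine sum_neg (fun i hi => ?_) hs
  have := mul_pos (mul_pos (ha i hi) (hk i hi)) (exp_pos (-k i * t))
  linarith

end ExpSum

section Coefficients

variable {r : ℝ} (hr : 0 < r)
include hr

theorem uu_pos : 0 < uu r := Real.sqrt_pos.2 (by positivity)

theorem uu_sq : uu r ^ 2 = 4 + 2*r + r^2 := Real.sq_sqrt (by positivity)

theorem uu_lt_six_add : uu r < 6 + r := by
  nlinarith [uu_sq hr, uu_pos hr]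

theorem c0_pos : 0 < c0 r := by
  unfold c0; positivity

theorem cp_pos : 0 < cp r := by
  have hu := uu_pos hr
  -- `(u(16+3r))² - (32+14r+3r²)² = 6r²(16+5r) > 0`
  have hsq : (uu r * (16 + 3*r))^2 = (4 + 2*r + r^2) * (16 + 3*r)^2 := by
    rw [mul_pow, uu_sq hr]
  have hnum : 0 < uu r * (16 + 3*r) - (32 + 14*r + 3*r^2) := by
    nlinarith [mul_pos hu (by linarith : (0:ℝ) < 16 + 3*r)]
  unfold cp
  positivity

theorem cm_pos : 0 < cm r := by
  have hu := uu_pos hr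
  unfold cm
  positivity

theorem c0_add_cp_add_cm : c0 r + cp r + cm r = pC r - pC r ^ 2 := by
  have hu := (uu_pos hr).ne'
  unfold c0 cp cm pC
  field_simp
  ring

end Coefficients

theorem fCC_eq_expSum (r : ℝ) :
    fCC r = fun t => expSum Finset.univ ![c0 r, cp r, cm r] ![4, 6 + r + uu r, 6 + r - uu r] t
      + pC r ^ 2 := by
  ext t
  simp only [fCC, expSum, Fin.sum_univ_three]
  rfl

/-- f is a diffeomorphism (in particular a bijection) from [0,∞) onto (p², p]. -/
theorem stmt9 (r : ℝ) (hr : 0 < r) :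
    Set.BijOn (fCC r) (Ici 0) (Ioc ((pC r)^2) (pC r)) ∧
    (∀ t : ℝ, DifferentiableAt ℝ (fCC r) t) ∧
    ∀ t : ℝ, deriv (fCC r) t ≠ 0 := by
  have ha : ∀ i ∈ Finset.univ, 0 < ![c0 r, cp r, cm r] i := by
    intro i _
    fin_cases i
    exacts [c0_pos hr, cp_pos hr, cm_pos hr]
  have hk : ∀ i ∈ Finset.univ, 0 < ![4, 6 + r + uu r, 6 + r - uu r] i := by
    intro i _
    fin_cases i
    exacts [four_pos, add_pos (by linarith) (uu_pos hr), sub_pos.2 (uu_lt_six_add hr)]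
  have hderiv (t : ℝ) : deriv (fCC r) t < 0 := by
    rw [fCC_eq_expSum, deriv_add_const]
    exact deriv_expSum_neg Finset.univ_nonempty ha hk t
  have hdiff (t : ℝ) : DifferentiableAt ℝ (fCC r) t := by
    rw [fCC_eq_expSum]
    exact ((hasDerivAt_expSum _ _ _ t).add_const _).differentiableAt
  have hlim : Tendsto (fCC r) atTop (nhds (pC r ^ 2)) := by
    rw [fCC_eq_expSum]
    simpa using (tendsto_expSum_atTop _ _ _ hk).add_const (pC r ^ 2)
  have hzero : fCC r 0 = pC r := by
    rw [fCC_eq_expSum]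
    simp [expSum_zero, Fin.sum_univ_three, c0_add_cp_add_cm hr]
  refine ⟨?_, hdiff, fun t => (hderiv t).ne⟩
  have := bijOn_Ici_Ioc_of_strictAntiOn (a := 0) (Differentiable.continuous hdiff).continuousOn
    ((strictAnti_of_deriv_neg hderiv).strictAntiOn _) hlim
  rwa [hzero] at this
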